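/- (Anisimov's Theorem for inverse semigroups) A finitely generated inverse semigroup is finite if and only if its idempotent problem with respect to some (equivalently, any) finite generating set is a regular language. -/

import Mathlib

/-- A semigroup is inverse if every element has a unique inverse. -/
def IsInverseSemigroup (S : Type*) [Semigroup S] : Prop :=
  ∀ x : S, ∃! y : S, x * y * x = x ∧ y * x * y = y

/-- Syntactic equivalence of words of `Σ*` with respect to `L ⊆ Σ*`. -/
def SynEqM {α : Type*} (L : Set (FreeMonoid α)) (u v : FreeMonoid α) : Prop :=
  ∀ x y : FreeMonoid α, x * u * y ∈ L ↔ x * v * y ∈ L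

/-- The syntactic congruence as a setoid on the free monoid; the quotient is
the syntactic monoid of `L`. -/
def synSetoidM {α : Type*} (L : Set (FreeMonoid α)) : Setoid (FreeMonoid α) :=
  ⟨SynEqM L, fun _ _ _ => Iff.rfl, fun h x y => (h x y).symm,
   fun h1 h2 x y => (h1 x y).trans (h2 x y)⟩

/-- The canonical embedding of the free semigroup into the free monoid. -/
def toFreeMonoid {α : Type*} : FreeSemigroup α →ₙ* FreeMonoid α :=
  FreeSemigroup.lift FreeMonoid.of

/-- The idempotent problem of `I` w.r.t. `π : Σ⁺ → I`, viewed as a language in `Σ*`: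
the (nonempty) words representing idempotent elements of `I`. -/
def idemLangM {α I : Type*} [Semigroup I] (π : FreeSemigroup α →ₙ* I) :
    Set (FreeMonoid α) :=
  {w | ∃ u : FreeSemigroup α, toFreeMonoid u = w ∧ IsIdempotentElem (π u)}

/-!
If `I` is finite, the syntactic congruence of the idempotent problem contains the kernel of the
extension `FreeMonoid α →* I¹` of `π`, so the syntactic monoid `M` is finite.

Conversely, that congruence is idempotent-pure: `u ≡ v` forces `u⁻¹ v` to be idempotent in `I¹`.
In an inverse monoid, `a = b` as soon as `a a⁻¹ = b b⁻¹` and `a⁻¹ b` is idempotent, so an element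
is determined by its class in `M` and its range idempotent `a a⁻¹`. For `a` read from a word `w`,
induction along the prefixes of `w'` shows `a a⁻¹ ≤ b b⁻¹` whenever the path of `w` in the Cayley
graph of `M` traverses every edge traversed by the path of a word `w'` for `b`. Hence `I` injects
into `M × Set (M × α)`.
-/

namespace IsInverseSemigroup

variable {S : Type*} [Semigroup S] (hS : IsInverseSemigroup S)
include hS

noncomputable def inv (a : S) : S := (hS a).exists.choose

theorem mul_inv_mul (a : S) : a * hS.inv a * a = a := (hS a).exists.choose_spec.1

theorem inv_mul_inv (a : S) : hS.inv a * a * hS.inv a = hS.inv a := (hS a).exists.choose_spec.2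

theorem eq_inv {a b : S} (h₁ : a * b * a = a) (h₂ : b * a * b = b) : b = hS.inv a :=
  (hS a).unique ⟨h₁, h₂⟩ ⟨hS.mul_inv_mul a, hS.inv_mul_inv a⟩

theorem inv_inv (a : S) : hS.inv (hS.inv a) = a :=
  (hS.eq_inv (hS.inv_mul_inv a) (hS.mul_inv_mul a)).symm

theorem inv_eq_self {e : S} (he : IsIdempotentElem e) : hS.inv e = e :=
  (hS.eq_inv (by rw [he.eq, he.eq]) (by rw [he.eq, he.eq])).symm

theorem isIdempotentElem_mul_inv (a : S) : IsIdempotentElem (a * hS.inv a) := by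
  rw [IsIdempotentElem, ← mul_assoc, hS.mul_inv_mul]

theorem isIdempotentElem_inv_mul (a : S) : IsIdempotentElem (hS.inv a * a) := by
  rw [IsIdempotentElem, ← mul_assoc, hS.inv_mul_inv]

theorem isIdempotentElem_of_isIdempotentElem_inv {a : S} (h : IsIdempotentElem (hS.inv a)) :
    IsIdempotentElem a := by
  rwa [← hS.inv_inv a, hS.inv_eq_self h]

/-- With `s` the inverse of `e * f`, the element `f * s * e` is another inverse of `e * f`, hence
equal to `s`, and visibly idempotent; so `e * f`, the inverse of `s`, is `s` itself. -/
theorem isIdempotentElem_mul {e f : S} (he : IsIdempotentElem e) (hf : IsIdempotentElem f) :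
    IsIdempotentElem (e * f) := by
  set s := hS.inv (e * f)
  have hs₁ : e * f * s * (e * f) = e * f := hS.mul_inv_mul (e * f)
  have hs₂ : s * (e * f) * s = s := hS.inv_mul_inv (e * f)
  have hfse : f * s * e = s := by
    refine hS.eq_inv ?_ ?_
    · calc e * f * (f * s * e) * (e * f) = e * (f * f) * s * (e * e * f) := by
            simp only [mul_assoc]
        _ = e * f := by rw [he.eq, hf.eq, hs₁]
    · calc f * s * e * (e * f) * (f * s * e) = f * (s * (e * e * (f * f)) * s) * e := by
            simp only [mul_assoc]
        _ = f * s * e := by rw [he.eq, hf.eq, hs₂]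
  have hs : IsIdempotentElem s :=
    calc s * s = f * s * e * (f * s * e) := by rw [hfse]
      _ = f * (s * (e * f) * s) * e := by simp only [mul_assoc]
      _ = s := by rw [hs₂, hfse]
  have hinv : hS.inv s = e * f := hS.inv_inv (e * f)
  rw [← hinv, hS.inv_eq_self hs]
  exact hs

theorem commute_of_isIdempotentElem {e f : S} (he : IsIdempotentElem e)
    (hf : IsIdempotentElem f) : Commute e f := by
  have hef := (hS.isIdempotentElem_mul he hf).eq
  have hfe := (hS.isIdempotentElem_mul hf he).eq
  have : f * e = hS.inv (e * f) := by
    refine hS.eq_inv ?_ ?_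
    · simpa only [mul_assoc, he.mul_self_mul, hf.mul_self_mul] using hef
    · simpa only [mul_assoc, he.mul_self_mul, hf.mul_self_mul] using hfe
  rw [Commute, SemiconjBy, this, hS.inv_eq_self (hS.isIdempotentElem_mul he hf)]

theorem mul_inv_rev (a b : S) : hS.inv (a * b) = hS.inv b * hS.inv a := by
  have hcomm := hS.commute_of_isIdempotentElem (hS.isIdempotentElem_mul_inv b)
    (hS.isIdempotentElem_inv_mul a)
  refine (hS.eq_inv ?_ ?_).symm
  · calc a * b * (hS.inv b * hS.inv a) * (a * b)
        = a * (b * hS.inv b * (hS.inv a * a)) * b := by simp only [mul_assoc]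
      _ = a * hS.inv a * a * (b * hS.inv b * b) := by rw [hcomm.eq]; simp only [mul_assoc]
      _ = a * b := by rw [hS.mul_inv_mul, hS.mul_inv_mul]
  · calc hS.inv b * hS.inv a * (a * b) * (hS.inv b * hS.inv a)
        = hS.inv b * (hS.inv a * a * (b * hS.inv b)) * hS.inv a := by simp only [mul_assoc]
      _ = hS.inv b * b * hS.inv b * (hS.inv a * a * hS.inv a) := by
          rw [← hcomm.eq]; simp only [mul_assoc]
      _ = hS.inv b * hS.inv a := by rw [hS.inv_mul_inv, hS.inv_mul_inv]

theorem withOne : IsInverseSemigroup (WithOne S) := by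
  intro x
  induction x using WithOne.recOneCoe with
  | one => exact ⟨1, by simp, fun y ⟨hy, _⟩ => by simpa using hy⟩
  | coe a =>
    refine ⟨hS.inv a, ?_, fun y ⟨hy₁, hy₂⟩ => ?_⟩
    · simp only [← WithOne.coe_mul, hS.mul_inv_mul, hS.inv_mul_inv, and_self]
    induction y using WithOne.recOneCoe with
    | one => simp at hy₂
    | coe b =>
      simp only [← WithOne.coe_mul, WithOne.coe_inj] at hy₁ hy₂ ⊢
      exact hS.eq_inv hy₁ hy₂

theorem mul_inv_mul_mul_inv_left (c r : S) :
    c * r * hS.inv (c * r) * (c * hS.inv c) = c * r * hS.inv (c * r) := by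
  rw [hS.mul_inv_rev]
  simp only [mul_assoc]
  rw [← mul_assoc (hS.inv c) c, hS.inv_mul_inv]

theorem eq_of_mul_inv_eq_of_isIdempotentElem_inv_mul {a b : S}
    (hdom : a * hS.inv a = b * hS.inv b) (hab : IsIdempotentElem (hS.inv a * b)) : a = b := by
  have hba : hS.inv b * a = hS.inv a * b := by
    rw [← hS.inv_eq_self hab, hS.mul_inv_rev, hS.inv_inv]
  have ha : a = b * (hS.inv a * b) := by
    rw [← hba, ← mul_assoc, ← hdom, hS.mul_inv_mul]
  have hb : b = a * (hS.inv a * b) := by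
    rw [← mul_assoc, hdom, hS.mul_inv_mul]
  calc a = b * (hS.inv a * b) := ha
    _ = a * (hS.inv a * b) * (hS.inv a * b) := by rw [← hb]
    _ = b := by rw [mul_assoc, hab.eq, ← hb]

theorem mul_mul_inv_mul_eq_of_isIdempotentElem {e : S} (he : IsIdempotentElem e) (x : S) :
    e * x * hS.inv (e * x) = e * (x * hS.inv x) :=
  calc e * x * hS.inv (e * x) = e * (x * hS.inv x * e) := by
        rw [hS.mul_inv_rev, hS.inv_eq_self he]; simp only [mul_assoc]
    _ = e * (x * hS.inv x) := by
        rw [(hS.commute_of_isIdempotentElem (hS.isIdempotentElem_mul_inv x) he).eq,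
          he.mul_self_mul]

theorem mul_eq_mul_inv_mul_mul {f : S} (hf : IsIdempotentElem f) (g : S) :
    f * g = g * (hS.inv g * f * g) :=
  calc f * g = f * (g * hS.inv g) * g := by rw [mul_assoc f, hS.mul_inv_mul]
    _ = g * (hS.inv g * f * g) := by
        rw [(hS.commute_of_isIdempotentElem hf (hS.isIdempotentElem_mul_inv g)).eq]
        simp only [mul_assoc]

/-- Here `e = (e v g)(e v g)⁻¹` and `e v g = e u (u⁻¹ v) g = e u g (g⁻¹ u⁻¹ v g)`; the range
idempotent of the latter lies below that of `e u g`, which is `e (u g)(u g)⁻¹`. -/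
theorem mul_mul_inv_eq_of_isIdempotentElem_inv_mul {e u v g : S} (he : IsIdempotentElem e)
    (hu : e * (u * hS.inv u) = e) (hvg : e * (v * g * hS.inv (v * g)) = e)
    (huv : IsIdempotentElem (hS.inv u * v)) : e * (u * g * hS.inv (u * g)) = e := by
  have hevg : e * (v * g) = e * u * g * (hS.inv g * (hS.inv u * v) * g) :=
    calc e * (v * g) = e * u * ((hS.inv u * v) * g) := by
          conv_lhs => rw [← hu]
          simp only [mul_assoc]
      _ = e * u * g * (hS.inv g * (hS.inv u * v) * g) := by
          rw [hS.mul_eq_mul_inv_mul_mul huv, ← mul_assoc]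
  have he_eq : e = e * (v * g) * hS.inv (e * (v * g)) := by
    rw [hS.mul_mul_inv_mul_eq_of_isIdempotentElem he, hvg]
  rw [hevg] at he_eq
  have heug : e * u * g * hS.inv (e * u * g) = e * (u * g * hS.inv (u * g)) := by
    rw [mul_assoc e u g, hS.mul_mul_inv_mul_eq_of_isIdempotentElem he]
  set k := hS.inv g * (hS.inv u * v) * g
  calc e * (u * g * hS.inv (u * g))
      = e * (e * (u * g * hS.inv (u * g))) := (he.mul_self_mul _).symm
    _ = e * u * g * k * hS.inv (e * u * g * k) * (e * u * g * hS.inv (e * u * g)) := by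
        rw [heug, ← he_eq]
    _ = e := by rw [hS.mul_inv_mul_mul_inv_left, ← he_eq]

end IsInverseSemigroup

namespace IdempotentProblem

open FreeMonoid

variable {α I : Type*} [Semigroup I]

section

variable (π : FreeSemigroup α →ₙ* I)

def liftWithOne : FreeMonoid α →* WithOne I :=
  FreeMonoid.lift fun a => (π (FreeSemigroup.of a) : WithOne I)

theorem liftWithOne_toFreeMonoid (u : FreeSemigroup α) :
    liftWithOne π (toFreeMonoid u) = π u := by
  have : (liftWithOne π).toMulHom.comp toFreeMonoid = WithOne.coeMulHom.comp π :=
    FreeSemigroup.hom_ext rfl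
  exact DFunLike.congr_fun this u

theorem exists_toFreeMonoid_eq {w : FreeMonoid α} (hw : w ≠ 1) :
    ∃ u : FreeSemigroup α, toFreeMonoid u = w := by
  induction w using FreeMonoid.inductionOn' with
  | one => exact absurd rfl hw
  | of_mul a w ih =>
    by_cases hw' : w = 1
    · exact ⟨FreeSemigroup.of a, by simp [hw', toFreeMonoid]⟩
    · obtain ⟨u, rfl⟩ := ih hw'
      exact ⟨FreeSemigroup.of a * u, by simp [toFreeMonoid]⟩

theorem liftWithOne_eq_one_iff {w : FreeMonoid α} : liftWithOne π w = 1 ↔ w = 1 := by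
  refine ⟨fun h => by_contra fun hw => ?_, fun h => h ▸ map_one _⟩
  obtain ⟨u, rfl⟩ := exists_toFreeMonoid_eq hw
  exact WithOne.coe_ne_one (h ▸ liftWithOne_toFreeMonoid π u).symm

theorem mem_idemLangM_iff {w : FreeMonoid α} :
    w ∈ idemLangM π ↔ w ≠ 1 ∧ IsIdempotentElem (liftWithOne π w) := by
  constructor
  · rintro ⟨u, rfl, hu⟩
    rw [Ne, ← liftWithOne_eq_one_iff π, liftWithOne_toFreeMonoid]
    exact ⟨WithOne.coe_ne_one, hu.map WithOne.coeMulHom⟩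
  · rintro ⟨hw, hidem⟩
    obtain ⟨u, rfl⟩ := exists_toFreeMonoid_eq hw
    rw [liftWithOne_toFreeMonoid, IsIdempotentElem, ← WithOne.coe_mul, WithOne.coe_inj] at hidem
    exact ⟨u, rfl, hidem⟩

theorem liftWithOne_surjective (hπ : Function.Surjective π) :
    Function.Surjective (liftWithOne π) := by
  intro x
  induction x using WithOne.recOneCoe with
  | one => exact ⟨1, map_one _⟩
  | coe i =>
    obtain ⟨u, rfl⟩ := hπ i
    exact ⟨toFreeMonoid u, liftWithOne_toFreeMonoid π u⟩

theorem synEqM_of_liftWithOne_eq {u v : FreeMonoid α} (h : liftWithOne π u = liftWithOne π v) :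
    SynEqM (idemLangM π) u v := by
  intro x y
  simp only [mem_idemLangM_iff, ne_eq, ← liftWithOne_eq_one_iff π, map_mul, h]

end

variable {π : FreeSemigroup α →ₙ* I}

theorem eq_one_of_synEqM_one (hI : IsInverseSemigroup I) (hπ : Function.Surjective π)
    {v : FreeMonoid α} (h : SynEqM (idemLangM π) 1 v) : v = 1 := by
  by_contra hv
  obtain ⟨x, hx⟩ := liftWithOne_surjective π hπ (hI.withOne.inv (liftWithOne π v))
  have hxv : x * v ∈ idemLangM π := by
    refine (mem_idemLangM_iff π).2 ⟨fun h => hv (eq_one_of_mul_left' h), ?_⟩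
    rw [map_mul, hx]
    exact hI.withOne.isIdempotentElem_inv_mul _
  have hx_idem : IsIdempotentElem (liftWithOne π x) := by
    simpa only [mul_one] using ((mem_idemLangM_iff π).1 ((h x 1).2 (by simpa using hxv))).2
  rw [hx] at hx_idem
  have hv_mem : v ∈ idemLangM π :=
    (mem_idemLangM_iff π).2 ⟨hv, hI.withOne.isIdempotentElem_of_isIdempotentElem_inv hx_idem⟩
  exact ((mem_idemLangM_iff π).1 ((h 1 1).2 (by simpa using hv_mem))).1 rfl

theorem isIdempotentElem_inv_mul_of_synEqM (hI : IsInverseSemigroup I)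
    (hπ : Function.Surjective π) {u v : FreeMonoid α} (h : SynEqM (idemLangM π) u v) :
    IsIdempotentElem (hI.withOne.inv (liftWithOne π u) * liftWithOne π v) := by
  by_cases hu : u = 1
  · subst hu
    rw [eq_one_of_synEqM_one hI hπ h, map_one, hI.withOne.inv_eq_self .one, one_mul]
    exact .one
  obtain ⟨x, hx⟩ := liftWithOne_surjective π hπ (hI.withOne.inv (liftWithOne π u))
  have hxu : x * u * 1 ∈ idemLangM π := by
    refine (mem_idemLangM_iff π).2 ⟨fun h => hu (eq_one_of_mul_left' (by simpa using h)), ?_⟩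
    rw [mul_one, map_mul, hx]
    exact hI.withOne.isIdempotentElem_inv_mul _
  simpa only [map_mul, map_one, mul_one, hx] using ((mem_idemLangM_iff π).1 ((h x 1).1 hxu)).2

/-- The labelled edges of the Cayley graph of `FreeMonoid α ⧸ c` along the path from the identity
that reads `w`. -/
def pathEdges (c : Setoid (FreeMonoid α)) (w : FreeMonoid α) : Set (Quotient c × α) :=
  {e | ∃ p g r, w = p * of g * r ∧ e = (Quotient.mk c p, g)}

theorem mul_inv_mul_mul_inv_eq_of_pathEdges_subset (hI : IsInverseSemigroup I)
    (hπ : Function.Surjective π) {w w' : FreeMonoid α}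
    (h : pathEdges (synSetoidM (idemLangM π)) w' ⊆ pathEdges (synSetoidM (idemLangM π)) w) :
    liftWithOne π w * hI.withOne.inv (liftWithOne π w) *
        (liftWithOne π w' * hI.withOne.inv (liftWithOne π w')) =
      liftWithOne π w * hI.withOne.inv (liftWithOne π w) := by
  set a := liftWithOne π w
  have he : IsIdempotentElem (a * hI.withOne.inv a) := hI.withOne.isIdempotentElem_mul_inv a
  suffices ∀ p r, w' = p * r →
      a * hI.withOne.inv a * (liftWithOne π p * hI.withOne.inv (liftWithOne π p)) =
        a * hI.withOne.inv a from this w' 1 (mul_one w').symm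
  intro p
  obtain ⟨l, rfl⟩ := FreeMonoid.ofList.surjective p
  induction l using List.reverseRecOn with
  | nil =>
    intro r _
    rw [ofList_nil, map_one, hI.withOne.inv_eq_self .one, mul_one, mul_one]
  | append_singleton l g ih =>
    rintro r rfl
    rw [ofList_append, ofList_singleton] at h ih ⊢
    obtain ⟨v, g', s, hw, hedge⟩ := h ⟨ofList l, g, r, rfl, rfl⟩
    obtain ⟨hlv, rfl⟩ := Prod.mk.inj hedge
    have hvg : a * hI.withOne.inv a *
        (liftWithOne π v * liftWithOne π (of g) *
          hI.withOne.inv (liftWithOne π v * liftWithOne π (of g))) = a * hI.withOne.inv a := by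
      rw [show a = liftWithOne π v * liftWithOne π (of g) * liftWithOne π s by
        simp only [a, hw, map_mul]]
      exact hI.withOne.mul_inv_mul_mul_inv_left _ _
    rw [map_mul]
    exact hI.withOne.mul_mul_inv_eq_of_isIdempotentElem_inv_mul he
      (ih (of g * r) (mul_assoc _ _ _)) hvg
      (isIdempotentElem_inv_mul_of_synEqM hI hπ (Quotient.exact hlv))

theorem liftWithOne_eq_of_pathEdges_eq (hI : IsInverseSemigroup I) (hπ : Function.Surjective π)
    {w w' : FreeMonoid α}
    (hclass : Quotient.mk (synSetoidM (idemLangM π)) w = Quotient.mk _ w')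
    (hedges : pathEdges (synSetoidM (idemLangM π)) w = pathEdges (synSetoidM (idemLangM π)) w') :
    liftWithOne π w = liftWithOne π w' := by
  set a := liftWithOne π w
  set b := liftWithOne π w'
  have hM := hI.withOne
  refine hM.eq_of_mul_inv_eq_of_isIdempotentElem_inv_mul ?_
    (isIdempotentElem_inv_mul_of_synEqM hI hπ (Quotient.exact hclass))
  calc a * hM.inv a = a * hM.inv a * (b * hM.inv b) :=
        (mul_inv_mul_mul_inv_eq_of_pathEdges_subset hI hπ hedges.ge).symm
    _ = b * hM.inv b * (a * hM.inv a) :=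
        hM.commute_of_isIdempotentElem (hM.isIdempotentElem_mul_inv a)
          (hM.isIdempotentElem_mul_inv b)
    _ = b * hM.inv b := mul_inv_mul_mul_inv_eq_of_pathEdges_subset hI hπ hedges.le

theorem finite_quotient_synSetoidM_of_finite [Finite I] (hπ : Function.Surjective π) :
    Finite (Quotient (synSetoidM (idemLangM π))) := by
  have : Finite (WithOne I) := inferInstanceAs (Finite (Option I))
  have hφ := liftWithOne_surjective π hπ
  refine Finite.of_surjective (fun x => Quotient.mk _ (Function.surjInv hφ x)) ?_
  rintro ⟨w⟩
  exact ⟨liftWithOne π w, Quotient.sound (synEqM_of_liftWithOne_eq π (Function.surjInv_eq hφ _))⟩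

theorem finite_of_finite_quotient_synSetoidM [Finite α] (hI : IsInverseSemigroup I)
    (hπ : Function.Surjective π) [Finite (Quotient (synSetoidM (idemLangM π)))] : Finite I := by
  let c := synSetoidM (idemLangM π)
  let word (i : I) : FreeMonoid α := toFreeMonoid (Function.surjInv hπ i)
  have hword (i : I) : liftWithOne π (word i) = i := by
    rw [liftWithOne_toFreeMonoid, Function.surjInv_eq hπ]
  refine Finite.of_injective (fun i => (Quotient.mk c (word i), pathEdges c (word i)))
    fun i j hij => ?_
  obtain ⟨hclass, hedges⟩ := Prod.mk.inj hij
  rw [← WithOne.coe_inj, ← hword i, ← hword j]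
  exact liftWithOne_eq_of_pathEdges_eq hI hπ hclass hedges

end IdempotentProblem

theorem anisimov_inverse_semigroups
    {α I : Type*} [Finite α] [Semigroup I]
    (hI : IsInverseSemigroup I)
    (π : FreeSemigroup α →ₙ* I) (hπ : Function.Surjective π) :
    Finite I ↔ Finite (Quotient (synSetoidM (idemLangM π))) :=
  ⟨fun _ => IdempotentProblem.finite_quotient_synSetoidM_of_finite hπ,
    fun _ => IdempotentProblem.finite_of_finite_quotient_synSetoidM hI hπ⟩
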